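/- For p = 0 and (1+α)R > 2 with 0 ≤ α < 1, the Jacobian J = [[−(1+α)R/2, 0, −2/(1+α)], [−(1+α), 1 − (1+α)R/2, −2], [0, (1+α)R/2 − 1, 0]] satisfies: trace(J) = 1 − (1+α)R < 0, det(J) = −(1/2)·((1+α)R − 2)² < 0, and trace(J)·S₂(J) − det(J) = −((1+α)R/4)·((1+α)R − 2)·(1 + (1+α)R) < 0, where S₂(J) is the sum of the principal 2×2 minors of J. Hence all three Routh–Hurwitz stability conditions hold. -/
import Mathlib


open Matrix

/-- For `p = 0` and `(1+α)R > 2`, the Jacobian at the unique endemic equilibrium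
satisfies all three Routh–Hurwitz stability conditions. -/
theorem p_zero_endemic_stable (R α : ℝ) (hR : 0 < R) (hα0 : 0 ≤ α) (hα1 : α < 1)
    (hQ : 2 < (1 + α) * R) :
    let J : Matrix (Fin 3) (Fin 3) ℝ :=
      !![-(1+α)*R/2, 0, -2/(1+α);
         -(1+α), 1 - (1+α)*R/2, -2;
         0, (1+α)*R/2 - 1, 0]
    let S₂ := (J 0 0 * J 1 1 - J 0 1 * J 1 0) + (J 0 0 * J 2 2 - J 0 2 * J 2 0)
      + (J 1 1 * J 2 2 - J 1 2 * J 2 1)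
    Matrix.trace J = 1 - (1+α)*R ∧ Matrix.trace J < 0 ∧
    J.det = -(1/2) * ((1+α)*R - 2)^2 ∧ J.det < 0 ∧
    Matrix.trace J * S₂ - J.det =
      -((1+α)*R/4) * ((1+α)*R - 2) * (1 + (1+α)*R) ∧
    Matrix.trace J * S₂ - J.det < 0 := by
  intro J S₂
  have hα : (1 + α) ≠ 0 := by positivity
  have hQ' : (0:ℝ) < (1 + α) * R - 2 := by linarith
  have htr : Matrix.trace J = 1 - (1+α)*R := by
    simp [J, Matrix.trace_fin_three]; ring
  have hdet : J.det = -(1/2) * ((1+α)*R - 2)^2 := by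
    simp [J, Matrix.det_fin_three]
    field_simp
    ring
  have hS : Matrix.trace J * S₂ - J.det =
      -((1+α)*R/4) * ((1+α)*R - 2) * (1 + (1+α)*R) := by
    rw [htr, hdet]
    simp only [S₂, J]
    simp [Matrix.cons_val_zero, Matrix.cons_val_one]
    field_simp
    ring
  refine ⟨htr, by rw [htr]; linarith, hdet, by rw [hdet]; nlinarith, hS, ?_⟩
  rw [hS]
  have h1 : (0:ℝ) < (1+α)*R/4 := by linarith
  nlinarith [mul_pos (mul_pos h1 hQ') (show (0:ℝ) < 1 + (1+α)*R by linarith)]
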